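/- arXiv:1608.08374 — 3 statements merged into one kernel-verified Lean document; each statement's English description precedes it below -/
import Mathlib

section
/- There exists a 3-colouring of the positive integers such that the only monochromatic solution to x + y = z^2 is x = y = z = 2. -/
/-!
Cut the positive integers into consecutive blocks `[a k, a (k + 1))` and colour each block by
its index modulo `3`. Let the block starts grow so fast that `a k ^ 2 ≤ a (k + 2)` and
`2 * a (k + 1) ≤ a k ^ 2` for `k ≥ 2`, and let `z` lie in block `k`. If `x` or `y` lies in a
higher block, it lies at least three blocks higher, hence above `z ^ 2`. Otherwise both lie
below `a (k + 1)`, so `x + y < 2 * a (k + 1) ≤ z ^ 2` as soon as `k ≥ 2`. Only the first blocks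
`{1}`, `{2, 3}` escape this, and there the only solution is `2 + 2 = 2 ^ 2`. The block starts
`1, 2, 4, 8, 32, 512, …` (`2 ^ (2 ^ k + 1)` from `4` on) do the job.
-/

/-- The index of the block `[a k, a (k + 1))` containing `n`. -/
def blockIndex (a : ℕ → ℕ) (n : ℕ) : ℕ :=
  Nat.findGreatest (fun k => a k ≤ n) n

section blockIndex

variable {a : ℕ → ℕ} {n : ℕ}

theorem apply_blockIndex_le (h : a 0 ≤ n) : a (blockIndex a n) ≤ n :=
  Nat.findGreatest_spec (P := fun k => a k ≤ n) (Nat.zero_le n) h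

theorem lt_apply_blockIndex_succ (ha : StrictMono a) (n : ℕ) : n < a (blockIndex a n + 1) := by
  by_contra! h
  exact Nat.not_succ_le_self _
    (Nat.le_findGreatest (P := fun k => a k ≤ n) (ha.le_apply.trans h) h)

theorem lt_apply_of_blockIndex_lt (ha : StrictMono a) {k : ℕ} (h : blockIndex a n < k) :
    n < a k :=
  (lt_apply_blockIndex_succ ha n).trans_le (ha.monotone h)

end blockIndex

section blockColouring

variable {a : ℕ → ℕ} (ha : StrictMono a) {x y z : ℕ}
include ha

theorem sq_lt_of_blockIndex_add_three_le (hsq : ∀ m, a m ^ 2 ≤ a (m + 2)) (hy : a 0 ≤ y)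
    (h : blockIndex a z + 3 ≤ blockIndex a y) : z ^ 2 < y := by
  obtain ⟨m, hm⟩ : ∃ m, blockIndex a y = m + 2 :=
    ⟨_, (Nat.sub_add_cancel (by omega)).symm⟩
  calc z ^ 2 < a m ^ 2 := Nat.pow_lt_pow_left (lt_apply_of_blockIndex_lt ha (by omega)) two_ne_zero
    _ ≤ a (blockIndex a y) := hm ▸ hsq m
    _ ≤ y := apply_blockIndex_le hy

theorem add_lt_sq_of_blockIndex_le (hsucc : ∀ m, 2 * a (m + 3) ≤ a (m + 2) ^ 2) (hz : a 0 ≤ z)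
    (hx : blockIndex a x ≤ blockIndex a z) (hy : blockIndex a y ≤ blockIndex a z)
    (h : 2 ≤ blockIndex a z) : x + y < z ^ 2 := by
  obtain ⟨m, hm⟩ : ∃ m, blockIndex a z = m + 2 := ⟨_, (Nat.sub_add_cancel h).symm⟩
  have hx' : x < a (m + 3) := lt_apply_of_blockIndex_lt ha (by omega)
  have hy' : y < a (m + 3) := lt_apply_of_blockIndex_lt ha (by omega)
  calc x + y < 2 * a (m + 3) := by omega
    _ ≤ a (blockIndex a z) ^ 2 := hm ▸ hsucc m
    _ ≤ z ^ 2 := Nat.pow_le_pow_left (apply_blockIndex_le hz) 2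

theorem eq_two_of_blockIndex_modEq (h0 : a 0 = 1) (h1 : a 1 = 2) (h2 : a 2 = 4)
    (hsq : ∀ m, a m ^ 2 ≤ a (m + 2)) (hsucc : ∀ m, 2 * a (m + 3) ≤ a (m + 2) ^ 2)
    (hx : 0 < x) (hy : 0 < y) (hz : 0 < z)
    (hxy : blockIndex a x % 3 = blockIndex a y % 3)
    (hyz : blockIndex a y % 3 = blockIndex a z % 3) (h : x + y = z ^ 2) :
    x = 2 ∧ y = 2 ∧ z = 2 := by
  have hx0 : a 0 ≤ x := h0 ▸ hx
  have hy0 : a 0 ≤ y := h0 ▸ hy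
  have hz0 : a 0 ≤ z := h0 ▸ hz
  by_cases hzx : blockIndex a z < blockIndex a x
  · have : z ^ 2 < x := sq_lt_of_blockIndex_add_three_le ha hsq hx0 (by omega)
    omega
  by_cases hzy : blockIndex a z < blockIndex a y
  · have : z ^ 2 < y := sq_lt_of_blockIndex_add_three_le ha hsq hy0 (by omega)
    omega
  by_cases hz2 : 2 ≤ blockIndex a z
  · have : x + y < z ^ 2 := add_lt_sq_of_blockIndex_le ha hsucc hz0 (by omega) (by omega) hz2
    omega
  -- `x`, `y`, `z` now share one of the blocks `{1}` or `{2, 3}`.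
  have hix : blockIndex a x = blockIndex a z := by omega
  have hiy : blockIndex a y = blockIndex a z := by omega
  have hz4 : z < 4 := h2 ▸ lt_apply_of_blockIndex_lt ha (by omega)
  have hx4 : x < 4 := h2 ▸ lt_apply_of_blockIndex_lt ha (by omega)
  have hy4 : y < 4 := h2 ▸ lt_apply_of_blockIndex_lt ha (by omega)
  obtain hz1 | hz1 := (by omega : blockIndex a z = 0 ∨ blockIndex a z = 1)
  · have : z < 2 := h1 ▸ lt_apply_of_blockIndex_lt ha (by omega)
    interval_cases z
    omega
  · have hx2 : 2 ≤ x := by rw [← h1, ← hz1, ← hix]; exact apply_blockIndex_le hx0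
    have hy2 : 2 ≤ y := by rw [← h1, ← hz1, ← hiy]; exact apply_blockIndex_le hy0
    interval_cases z <;> omega

end blockColouring

def tower : ℕ → ℕ
  | 0 => 1
  | 1 => 2
  | k + 2 => 2 ^ (2 ^ k + 1)

theorem tower_strictMono : StrictMono tower := by
  refine strictMono_nat_of_lt_succ fun k => ?_
  match k with
  | 0 => decide
  | 1 => decide
  | k + 2 =>
    show 2 ^ (2 ^ k + 1) < 2 ^ (2 ^ (k + 1) + 1)
    exact Nat.pow_lt_pow_right one_lt_two (by rw [pow_succ]; have := k.one_le_two_pow; omega)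

theorem two_mul_tower_add_three (m : ℕ) : 2 * tower (m + 3) = tower (m + 2) ^ 2 := by
  show 2 * 2 ^ (2 ^ (m + 1) + 1) = (2 ^ (2 ^ m + 1)) ^ 2
  rw [← pow_succ', ← pow_mul, pow_succ]
  ring

theorem sq_tower_le_tower_add_two : ∀ m, tower m ^ 2 ≤ tower (m + 2)
  | 0 => by decide
  | 1 => by decide
  | m + 2 => by
    show (2 ^ (2 ^ m + 1)) ^ 2 ≤ 2 ^ (2 ^ (m + 2) + 1)
    rw [← pow_mul]
    refine Nat.pow_le_pow_right two_pos ?_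
    have := m.one_le_two_pow
    rw [pow_succ, pow_succ]
    omega

theorem stmt_0 :
    ∃ c : ℕ → Fin 3,
      ∀ x y z : ℕ, 0 < x → 0 < y → 0 < z →
        c x = c y → c y = c z → x + y = z ^ 2 →
        x = 2 ∧ y = 2 ∧ z = 2 := by
  refine ⟨fun n => ⟨blockIndex tower n % 3, Nat.mod_lt _ three_pos⟩, ?_⟩
  intro x y z hx hy hz hxy hyz h
  exact eq_two_of_blockIndex_modEq tower_strictMono rfl rfl rfl sq_tower_le_tower_add_two
    (fun m => (two_mul_tower_add_three m).le) hx hy hz (Fin.mk.inj hxy) (Fin.mk.inj hyz) h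
end

section
/- There exists a function c : ℕ → Fin 3 on the nonnegative integers with c(0), c(1), c(2) pairwise distinct such that for all i ≥ 3, c(i) ≠ c(⌊i/2⌋) and c(i) ≠ c(⌊i/2⌋ + 1). -/
def pick (a b : Fin 3) : Fin 3 :=
  if 0 ≠ a ∧ 0 ≠ b then 0 else if 1 ≠ a ∧ 1 ≠ b then 1 else 2

lemma pick_spec (a b : Fin 3) : pick a b ≠ a ∧ pick a b ≠ b := by
  revert a b; decide

def col : ℕ → Fin 3
  | 0 => 0
  | 1 => 1
  | 2 => 2
  | (i+3) => pick (col ((i+3)/2)) (col ((i+3)/2+1))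
  decreasing_by all_goals omega

theorem stmt_1 :
    ∃ c : ℕ → Fin 3,
      c 0 ≠ c 1 ∧ c 0 ≠ c 2 ∧ c 1 ≠ c 2 ∧
      ∀ i : ℕ, 3 ≤ i → c i ≠ c (i / 2) ∧ c i ≠ c (i / 2 + 1) := by
  refine ⟨col, by simp only [col]; decide, by simp only [col]; decide, by simp only [col]; decide, ?_⟩
  intro i hi
  obtain ⟨j, rfl⟩ : ∃ j, i = j + 3 := ⟨i - 3, by omega⟩
  rw [col]
  exact pick_spec _ _
end

section
/- Let α₁ < β₁, α₂ < β₂, and γ₁, γ₂ be nonnegative reals with α₁² + α₂² < γ₁ < γ₂ < β₁² + β₂², and let q be a positive integer. There is a constant C (depending on the αᵢ, βᵢ, γᵢ, q) such that for all sufficiently large N: for every integer n with γ₁N² ≤ n ≤ γ₂N², there exist integers n₁, n₂ divisible by q with α₁N ≤ n₁ ≤ β₁N, α₂N ≤ n₂ ≤ β₂N, and |n₁² + n₂² - n| ≤ C√N. -/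
set_option maxHeartbeats 16000000


lemma int_cross (Q : ℤ → Prop) (m M : ℤ) (h : m ≤ M) (hm : Q m) (hM : ¬ Q M) :
    ∃ a, m ≤ a ∧ a < M ∧ Q a ∧ ¬ Q (a + 1) := by
  by_contra hc
  push_neg at hc
  have key : ∀ k : ℕ, m + (k : ℤ) ≤ M → Q (m + k) := by
    intro k
    induction k with
    | zero => intro _; simpa using hm
    | succ k ih =>
      intro hk
      have h1 : m + (k : ℤ) < M := by push_cast at hk ⊢; omega
      have h2 := hc (m + k) (by omega) h1 (ih (by omega))
      have : m + (((k : ℕ) + 1 : ℕ) : ℤ) = (m + k) + 1 := by push_cast; ring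
      rw [this]
      exact h2
  have h3 := key (M - m).toNat (by omega)
  apply hM
  have : m + ((M - m).toNat : ℤ) = M := by omega
  rwa [this] at h3

lemma lin_dom (a b c : ℝ) (hc : 0 < c) :
    ∃ N₁ : ℕ, ∀ N : ℕ, N₁ ≤ N → a * Real.sqrt N + b ≤ c * N := by
  refine ⟨⌈(2*|a|/c)^2 + 2*|b|/c + 1⌉₊, fun N hN => ?_⟩
  have hN' : ((2*|a|/c)^2 + 2*|b|/c + 1 : ℝ) ≤ N := by
    calc ((2*|a|/c)^2 + 2*|b|/c + 1 : ℝ) ≤ ⌈(2*|a|/c)^2 + 2*|b|/c + 1⌉₊ := Nat.le_ceil _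
    _ ≤ N := by exact_mod_cast hN
  have h1 : (0:ℝ) ≤ (2*|a|/c)^2 := sq_nonneg _
  have h2 : (0:ℝ) ≤ 2*|b|/c := by positivity
  have hNsq : (2*|a|/c) ≤ Real.sqrt N := by
    have := Real.sqrt_le_sqrt (show ((2*|a|/c)^2 : ℝ) ≤ N by linarith)
    rwa [Real.sqrt_sq (by positivity)] at this
  have hsN : (0:ℝ) ≤ Real.sqrt N := Real.sqrt_nonneg _
  have hs2 : Real.sqrt N * Real.sqrt N = N := Real.mul_self_sqrt (by positivity)
  have habs : |a| ≤ c/2 * Real.sqrt N := by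
    rw [div_le_iff₀ hc] at hNsq
    nlinarith
  have key1 : a * Real.sqrt N ≤ c/2 * N := by
    nlinarith [le_abs_self a, mul_le_mul_of_nonneg_right habs hsN]
  have key2 : b ≤ c/2 * N := by
    have h4 : 2*|b|/c ≤ (N:ℝ) := by linarith
    rw [div_le_iff₀ hc] at h4
    nlinarith [le_abs_self b]
  linarith


lemma phi_med_bounds (F ℓ R a' a s s' : ℝ) (hℓ0 : 0 < ℓ)
    (hs : s^2 = F - a^2) (hs' : s'^2 = F - a'^2)
    (u1 : ℓ ≤ a) (u2 : a ≤ R) (v1 : ℓ ≤ a') (v2 : a' ≤ R)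
    (u3 : ℓ ≤ s) (u4 : s ≤ R) (v3 : ℓ ≤ s') (v4 : s' ≤ R)
    (haa : a' ≤ a) :
    (2*ℓ^3/R^4 * (a - a') ≤ a/s - a'/s' ∧ a/s - a'/s' ≤ 2*R^3/ℓ^4 * (a - a')) ∧
    ((a - a')*(a'/s') ≤ s' - s ∧ s' - s ≤ (a - a')*(a/s)) := by
  have hR0 : 0 < R := lt_of_lt_of_le hℓ0 (le_trans u1 u2)
  have u6 : 0 < s := lt_of_lt_of_le hℓ0 u3
  have v6 : 0 < s' := lt_of_lt_of_le hℓ0 v3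
  have ha0 : 0 < a := lt_of_lt_of_le hℓ0 u1
  have ha'0 : 0 < a' := lt_of_lt_of_le hℓ0 v1
  have hd1 : 0 ≤ a - a' := by linarith
  have key : (a*s' - a'*s)*(a*s' + a'*s) = F*(a^2 - a'^2) := by
    linear_combination a^2 * hs' - a'^2 * hs
  have hden1 : 0 < a*s' + a'*s := add_pos (mul_pos ha0 v6) (mul_pos ha'0 u6)
  have hFpos : 0 < F := by nlinarith [hs, sq_nonneg s, ha0]
  have hsqle : a'^2 ≤ a^2 := by nlinarith
  have hnum_nn : 0 ≤ F*(a^2 - a'^2) := mul_nonneg hFpos.le (by linarith)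
  have h1 : a'*s ≤ a*s' := by nlinarith [key, hden1, hnum_nn]
  have hF2l : 2*ℓ^2 ≤ F := by
    nlinarith [mul_le_mul u3 u3 hℓ0.le u6.le, mul_le_mul u1 u1 hℓ0.le ha0.le, hs]
  have hF2u : F ≤ 2*R^2 := by
    nlinarith [mul_le_mul u4 u4 u6.le hR0.le, mul_le_mul u2 u2 ha0.le hR0.le, hs]
  have e2 : a/s - a'/s' = (a*s' - a'*s)/(s*s') := by
    field_simp
  have e1 : a*s' - a'*s = F*(a^2 - a'^2)/(a*s' + a'*s) := by
    rw [eq_div_iff (ne_of_gt hden1)]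
    linarith [key]
  have hDpos : 0 < (a*s' + a'*s)*(s*s') := by positivity
  have hc1 : 2*ℓ^3/R^4 * R^4 = 2*ℓ^3 := div_mul_cancel₀ _ (by positivity)
  have hc2 : 2*R^3/ℓ^4 * ℓ^4 = 2*R^3 := div_mul_cancel₀ _ (by positivity)
  have hm1 : a*s' ≤ R^2 := by nlinarith [mul_le_mul u2 v4 v6.le hR0.le]
  have hm2 : a'*s ≤ R^2 := by nlinarith [mul_le_mul v2 u4 u6.le hR0.le]
  have hm3 : s*s' ≤ R^2 := by nlinarith [mul_le_mul u4 v4 v6.le hR0.le]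
  have hm4 : ℓ^2 ≤ a*s' := by nlinarith [mul_le_mul u1 v3 hℓ0.le ha0.le]
  have hm5 : ℓ^2 ≤ a'*s := by nlinarith [mul_le_mul v1 u3 hℓ0.le ha'0.le]
  have hm6 : ℓ^2 ≤ s*s' := by nlinarith [mul_le_mul u3 v3 hℓ0.le u6.le]
  refine ⟨⟨?_, ?_⟩, ?_, ?_⟩
  · rw [e2, e1, div_div, le_div_iff₀ hDpos]
    have hd_ub : (a*s' + a'*s)*(s*s') ≤ 2*R^4 := by
      nlinarith [mul_le_mul (show a*s' + a'*s ≤ 2*R^2 by linarith) hm3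
        (by positivity) (by positivity)]
    have s1 : 2*ℓ^3/R^4 * (a-a') * ((a*s' + a'*s)*(s*s')) ≤
        2*ℓ^3/R^4 * (a-a') * (2*R^4) :=
      mul_le_mul_of_nonneg_left hd_ub (by positivity)
    have s2 : 2*ℓ^3/R^4 * (a-a') * (2*R^4) = 4*ℓ^3*(a-a') := by
      linear_combination 2*(a-a')*hc1
    have hFa : 4*ℓ^3 ≤ F*(a+a') := by
      nlinarith [mul_le_mul hF2l (show 2*ℓ ≤ a+a' by linarith) (by positivity) hFpos.le]
    have s3 : 4*ℓ^3*(a-a') ≤ F*(a^2 - a'^2) := by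
      nlinarith [mul_nonneg hd1 (show (0:ℝ) ≤ F*(a+a') - 4*ℓ^3 by linarith)]
    linarith
  · rw [e2, e1, div_div, div_le_iff₀ hDpos]
    have hd_lb : 2*ℓ^4 ≤ (a*s' + a'*s)*(s*s') := by
      nlinarith [mul_le_mul (show 2*ℓ^2 ≤ a*s' + a'*s by linarith) hm6
        (by positivity) (by linarith)]
    have hFb : F*(a+a') ≤ 4*R^3 := by
      nlinarith [mul_le_mul hF2u (show a+a' ≤ 2*R by linarith) (by linarith) (by positivity)]
    have s1 : F*(a^2 - a'^2) ≤ 4*R^3*(a-a') := by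
      nlinarith [mul_nonneg hd1 (show (0:ℝ) ≤ 4*R^3 - F*(a+a') by linarith)]
    have s2 : 4*R^3*(a-a') = 2*R^3/ℓ^4*(a-a')*(2*ℓ^4) := by
      linear_combination (-2)*(a-a')*hc2
    have s3 : 2*R^3/ℓ^4*(a-a')*(2*ℓ^4) ≤
        2*R^3/ℓ^4*(a-a')*((a*s' + a'*s)*(s*s')) :=
      mul_le_mul_of_nonneg_left hd_lb (by positivity)
    linarith
  all_goals {
    have key2 : (s' - s)*(s' + s) = a^2 - a'^2 := by linear_combination hs' - hs
    have hss : 0 < s' + s := by linarith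
    have e : s' - s = (a^2 - a'^2)/(s' + s) := by
      rw [eq_div_iff (ne_of_gt hss)]
      linarith [key2]
    have hkey3 : 0 ≤ (a-a')*(a*s' - a'*s) := mul_nonneg hd1 (by linarith)
    first
    | (rw [e, mul_div_assoc']
       rw [div_le_div_iff₀ v6 hss]
       nlinarith [hkey3])
    | (rw [e, mul_div_assoc']
       rw [div_le_div_iff₀ hss v6]
       nlinarith [hkey3])
    | (rw [e, mul_div_assoc']
       rw [div_le_div_iff₀ hss u6]
       nlinarith [hkey3])
  }

lemma core (F ℓ R : ℝ) (hℓ0 : 0 < ℓ) (hℓR : ℓ ≤ R)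
    (A L r h : ℤ) (hr : 0 < r) (hh : 0 < h)
    (hL : (2*h+2)*r + 1 ≤ L)
    (hwin : ∀ a : ℤ, A - L ≤ a → a ≤ A →
      ℓ ≤ (a:ℝ) ∧ (a:ℝ) ≤ R ∧ ℓ ≤ Real.sqrt (F - (a:ℝ)^2) ∧ Real.sqrt (F - (a:ℝ)^2) ≤ R)
    (hsweep : 2/(r:ℝ) ≤ (2*ℓ^3/R^4) * ((L:ℝ) - (2*(h:ℝ)+2)*(r:ℝ)))
    (hlam : 1 ≤ (2*ℓ^3/R^4) * (r:ℝ)^2 * (h:ℝ)^2) :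
    ∃ a b : ℤ, A - L ≤ a ∧ a ≤ A ∧
      |(b:ℝ) - Real.sqrt (F - (a:ℝ)^2)| ≤ (2*R^3/ℓ^4) * (r:ℝ)^2 * (2*(h:ℝ)+2) ∧
      |(a:ℝ)^2 + (b:ℝ)^2 - F| ≤
        (2*R^3/ℓ^4) * (r:ℝ)^2 * (2*(h:ℝ)+2) * (2*R + (2*R^3/ℓ^4) * (r:ℝ)^2 * (2*(h:ℝ)+2)) := by
  have hR0 : 0 < R := lt_of_lt_of_le hℓ0 hℓR
  set S : ℤ → ℝ := fun a => Real.sqrt (F - (a:ℝ)^2) with hSdef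
  set lam1 : ℝ := 2*ℓ^3/R^4 with hlam1def
  set lam2 : ℝ := 2*R^3/ℓ^4 with hlam2def
  set Δ : ℝ := lam2 * (r:ℝ)^2 * (2*(h:ℝ)+2) with hΔdef
  have hlam1p : 0 < lam1 := by positivity
  have hlam2p : 0 < lam2 := by positivity
  have hrR : (1:ℝ) ≤ (r:ℝ) := by exact_mod_cast hr
  have hhR : (1:ℝ) ≤ (h:ℝ) := by exact_mod_cast hh
  have hΔnn : 0 ≤ Δ := by positivity
  have hw : ∀ a : ℤ, A - L ≤ a → a ≤ A →
      ℓ ≤ (a:ℝ) ∧ (a:ℝ) ≤ R ∧ ℓ ≤ S a ∧ S a ≤ R ∧ (S a)^2 = F - (a:ℝ)^2 ∧ 0 < S a := by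
    intro a h1 h2
    obtain ⟨w1, w2, w3, w4⟩ := hwin a h1 h2
    have hpos : 0 < S a := lt_of_lt_of_le hℓ0 w3
    have harg : 0 < F - (a:ℝ)^2 := Real.sqrt_pos.mp hpos
    exact ⟨w1, w2, w3, w4, Real.sq_sqrt harg.le, hpos⟩
  have both : ∀ a' a : ℤ, A - L ≤ a' → a' ≤ a → a ≤ A →
      (lam1 * ((a:ℝ) - (a':ℝ)) ≤ (a:ℝ)/S a - (a':ℝ)/S a' ∧
       (a:ℝ)/S a - (a':ℝ)/S a' ≤ lam2 * ((a:ℝ) - (a':ℝ))) ∧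
      (((a:ℝ) - (a':ℝ)) * ((a':ℝ)/S a') ≤ S a' - S a ∧
       S a' - S a ≤ ((a:ℝ) - (a':ℝ)) * ((a:ℝ)/S a)) := by
    intro a' a ha' haa ha
    obtain ⟨u1, u2, u3, u4, u5, u6⟩ := hw a (le_trans ha' haa) ha
    obtain ⟨v1, v2, v3, v4, v5, v6⟩ := hw a' ha' (le_trans haa ha)
    exact phi_med_bounds F ℓ R (a':ℝ) (a:ℝ) (S a) (S a') hℓ0 u5 v5 u1 u2 v1 v2 u3 u4 v3 v4
      (by exact_mod_cast haa)
  have hr0R : (0:ℝ) < (r:ℝ) := by exact_mod_cast hr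
  -- choose the rational p/r inside the swept slope range
  have hKnn : (0:ℤ) ≤ (2*h+2)*r := mul_nonneg (by linarith) hr.le
  have hKwin1 : A - L ≤ A - L + (2*h+2)*r := by linarith
  have hKwin2 : A - L + (2*h+2)*r ≤ A := by linarith
  obtain ⟨z1, z2, z3, z4, z5, z6⟩ := hw (A - L + (2*h+2)*r) hKwin1 hKwin2
  set u : ℝ := ((A - L + (2*h+2)*r : ℤ):ℝ)/S (A - L + (2*h+2)*r) with hudef
  have hu0 : 0 < u := div_pos (lt_of_lt_of_le hℓ0 z1) z6
  set p : ℤ := ⌊(r:ℝ)*u⌋ + 1 with hpdef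
  have hp : 0 < p := by
    have : (0:ℤ) ≤ ⌊(r:ℝ)*u⌋ := Int.floor_nonneg.mpr (by positivity)
    omega
  have hlo : u ≤ (p:ℝ)/(r:ℝ) := by
    rw [le_div_iff₀ hr0R]
    have h1 := Int.lt_floor_add_one ((r:ℝ)*u)
    have h2 : ((p:ℤ):ℝ) = (⌊(r:ℝ)*u⌋:ℝ) + 1 := by rw [hpdef]; push_cast; ring
    rw [h2]
    linarith [h1]
  have hLpos : (0:ℤ) < L := by linarith
  have hhi : (p:ℝ)/(r:ℝ) < (A:ℝ)/S A := by
    have hAwin1 : A - L ≤ A := by linarith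
    have hmono := ((both (A - L + (2*h+2)*r) A hKwin1 hKwin2 le_rfl).1).1
    have hcastw : (A:ℝ) - ((A - L + (2*h+2)*r : ℤ):ℝ) = (L:ℝ) - (2*(h:ℝ)+2)*(r:ℝ) := by
      push_cast; ring
    rw [hcastw] at hmono
    have hfl : (⌊(r:ℝ)*u⌋:ℝ) ≤ (r:ℝ)*u := Int.floor_le _
    have h2 : ((p:ℤ):ℝ) = (⌊(r:ℝ)*u⌋:ℝ) + 1 := by rw [hpdef]; push_cast; ring
    rw [div_lt_iff₀ hr0R]
    have hexp2 : ((A:ℝ)/S A)*(r:ℝ) ≥ (u + 2/(r:ℝ))*(r:ℝ) := by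
      apply mul_le_mul_of_nonneg_right _ hr0R.le
      linarith [hsweep, hmono]
    have hexp3 : (u + 2/(r:ℝ))*(r:ℝ) = u*(r:ℝ) + 2 := by field_simp
    rw [hexp3] at hexp2
    rw [h2]
    linarith [hfl]
  -- crossing point a*
  have hmM : A - L + (2*h+2)*r ≤ A := by linarith
  obtain ⟨astar, has1, has2, has3, has4⟩ :=
    int_cross (fun a => (a:ℝ)/S a ≤ (p:ℝ)/(r:ℝ)) (A - L + (2*h+2)*r) A hmM hlo (not_le.mpr hhi)
  rw [not_le] at has4
  -- membership helper
  have hmem : ∀ j : ℤ, 0 ≤ j → j ≤ 2*h → A - L ≤ astar - j*r ∧ astar - j*r ≤ A := by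
    intro j hj0 hj2
    constructor
    · have h1 : j*r ≤ 2*h*r := mul_le_mul_of_nonneg_right hj2 hr.le
      linarith
    · have h1 : 0 ≤ j*r := mul_nonneg hj0 hr.le
      linarith
  have hastar_mem : A - L ≤ astar ∧ astar ≤ A := by
    have := hmem 0 le_rfl (by linarith)
    simpa using this
  have hastar1_mem : A - L ≤ astar + 1 ∧ astar + 1 ≤ A := ⟨by linarith [hastar_mem.1], has2⟩
  -- φ astar is close below p/r
  have hphi_lb : (p:ℝ)/(r:ℝ) - lam2 < (astar:ℝ)/S astar := by
    have hb := ((both astar (astar+1) hastar_mem.1 (by linarith) hastar1_mem.2).1).2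
    have hc : ((astar + 1 : ℤ):ℝ) - (astar:ℝ) = 1 := by push_cast; ring
    rw [hc] at hb
    have := has4
    linarith
  have hphi_ub : (astar:ℝ)/S astar ≤ (p:ℝ)/(r:ℝ) := has3
  have hrphi : (astar:ℝ)/S astar * (r:ℝ) ≤ (p:ℝ) := by
    rw [← le_div_iff₀ hr0R]
    exact hphi_ub
  -- step bounds for the sequence T j = S (astar - j*r)
  have cast_step : ∀ j : ℤ, ((astar - j*r : ℤ):ℝ) - ((astar - (j+1)*r : ℤ):ℝ) = (r:ℝ) := by
    intro j; push_cast; ring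
  have stepU : ∀ j : ℤ, 0 ≤ j → j + 1 ≤ 2*h →
      S (astar - (j+1)*r) - S (astar - j*r) ≤ (p:ℝ) := by
    intro j h0 h1
    have m1 := hmem j h0 (by linarith)
    have m2 := hmem (j+1) (by linarith) h1
    have hle : astar - (j+1)*r ≤ astar - j*r := by nlinarith [hr.le, h0]
    have hmedU := ((both (astar - (j+1)*r) (astar - j*r) m2.1 hle m1.2).2).2
    rw [cast_step j] at hmedU
    -- φ(astar - j*r) ≤ φ(astar)
    have hjr : astar - j*r ≤ astar := by nlinarith [mul_nonneg h0 hr.le]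
    have hmono := ((both (astar - j*r) astar m1.1 hjr hastar_mem.2).1).1
    have hjrR : (0:ℝ) ≤ (j:ℝ)*(r:ℝ) := mul_nonneg (by exact_mod_cast h0) hr0R.le
    have hcast2 : (astar:ℝ) - ((astar - j*r : ℤ):ℝ) = (j:ℝ)*(r:ℝ) := by push_cast; ring
    have hphile : ((astar - j*r : ℤ):ℝ)/S (astar - j*r) ≤ (astar:ℝ)/S astar := by
      rw [hcast2] at hmono
      nlinarith [mul_nonneg hlam1p.le hjrR]
    calc S (astar - (j+1)*r) - S (astar - j*r)
        ≤ (r:ℝ) * (((astar - j*r : ℤ):ℝ)/S (astar - j*r)) := hmedU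
      _ ≤ (r:ℝ) * ((astar:ℝ)/S astar) := by
          exact mul_le_mul_of_nonneg_left hphile hr0R.le
      _ ≤ (p:ℝ) := by linarith [hrphi]
  have stepL : ∀ j : ℤ, 0 ≤ j → j + 1 ≤ 2*h →
      (p:ℝ) - lam2*(r:ℝ)^2*((j:ℝ)+2) ≤ S (astar - (j+1)*r) - S (astar - j*r) := by
    intro j h0 h1
    have m1 := hmem j h0 (by linarith)
    have m2 := hmem (j+1) (by linarith) h1
    have hexp : (j+1)*r = j*r + r := by ring
    have hle : astar - (j+1)*r ≤ astar - j*r := by linarith [hexp, hr]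
    have hmedL := ((both (astar - (j+1)*r) (astar - j*r) m2.1 hle m1.2).2).1
    rw [cast_step j] at hmedL
    have hle2 : astar - (j+1)*r ≤ astar := le_trans hle (by nlinarith [mul_nonneg h0 hr.le])
    have hmono := ((both (astar - (j+1)*r) astar m2.1 hle2 hastar_mem.2).1).2
    have hcast3 : (astar:ℝ) - ((astar - (j+1)*r : ℤ):ℝ) = ((j:ℝ)+1)*(r:ℝ) := by push_cast; ring
    rw [hcast3] at hmono
    have hphia2 : (p:ℝ)/(r:ℝ) - lam2 - lam2*(((j:ℝ)+1)*(r:ℝ)) ≤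
        ((astar - (j+1)*r : ℤ):ℝ)/S (astar - (j+1)*r) := by linarith [hphi_lb]
    have hstep := mul_le_mul_of_nonneg_left hphia2 hr0R.le
    have hexpand : (r:ℝ) * ((p:ℝ)/(r:ℝ) - lam2 - lam2*(((j:ℝ)+1)*(r:ℝ))) =
        (p:ℝ) - lam2*(r:ℝ) - lam2*((j:ℝ)+1)*(r:ℝ)^2 := by
      field_simp
    have hjj : (0:ℝ) ≤ (j:ℝ) := by exact_mod_cast h0
    have hkey : lam2*(r:ℝ) + lam2*((j:ℝ)+1)*(r:ℝ)^2 ≤ lam2*(r:ℝ)^2*((j:ℝ)+2) := by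
      nlinarith [mul_nonneg hlam2p.le (mul_nonneg hr0R.le (show (0:ℝ) ≤ (r:ℝ) - 1 by linarith))]
    rw [hexpand] at hstep
    linarith [hmedL, hstep, hkey]
  -- total decrease over 2h steps
  have hmemh := hmem h hh.le (by linarith)
  have hmem2h := hmem (2*h) (by linarith) le_rfl
  have hlehh : astar - 2*h*r ≤ astar - h*r := by nlinarith [hr.le, hh.le]
  have hlehs : astar - h*r ≤ astar := by nlinarith [mul_nonneg hh.le hr.le]
  have hcast4 : ((astar - h*r : ℤ):ℝ) - ((astar - 2*h*r : ℤ):ℝ) = (h:ℝ)*(r:ℝ) := by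
    push_cast; ring
  have hcast5 : (astar:ℝ) - ((astar - h*r : ℤ):ℝ) = (h:ℝ)*(r:ℝ) := by push_cast; ring
  have hmedA := ((both (astar - 2*h*r) (astar - h*r) hmem2h.1 hlehh hmemh.2).2).2
  rw [hcast4] at hmedA
  have hmedB := ((both (astar - h*r) astar hmemh.1 hlehs hastar_mem.2).2).2
  rw [hcast5] at hmedB
  have hmonoh := ((both (astar - h*r) astar hmemh.1 hlehs hastar_mem.2).1).1
  rw [hcast5] at hmonoh
  have hhr_nn : (0:ℝ) ≤ (h:ℝ)*(r:ℝ) := by positivity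
  have hEbig : S (astar - 2*h*r) - S astar ≤ 2*(h:ℝ)*(p:ℝ) - 1 := by
    have c1 : (h:ℝ)*(r:ℝ) * (((astar - h*r : ℤ):ℝ)/S (astar - h*r)) ≤
        (h:ℝ)*(r:ℝ) * ((astar:ℝ)/S astar - lam1*((h:ℝ)*(r:ℝ))) :=
      mul_le_mul_of_nonneg_left (by linarith [hmonoh]) hhr_nn
    have c2 : (h:ℝ)*((astar:ℝ)/S astar * (r:ℝ)) ≤ (h:ℝ)*(p:ℝ) :=
      mul_le_mul_of_nonneg_left hrphi (by linarith)
    have c3 : 1 ≤ lam1 * (r:ℝ)^2 * (h:ℝ)^2 := hlam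
    nlinarith [hmedA, hmedB, c1, c2, c3]
  -- second crossing: fractional part sweep
  obtain ⟨j, hj0, hj2, hQj, hQj1⟩ :=
    int_cross (fun j : ℤ => ((⌊S astar⌋:ℤ):ℝ) ≤ S (astar - j*r) - (p:ℝ)*(j:ℝ)) 0 (2*h)
      (by linarith)
      (by
        simp only [Int.cast_zero, mul_zero, sub_zero, zero_mul]
        exact Int.floor_le _)
      (by
        push_neg
        have h2hc : ((2*h : ℤ):ℝ) = 2*(h:ℝ) := by push_cast; ring
        rw [h2hc]
        have := Int.sub_one_lt_floor (S astar)
        linarith [hEbig])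
  have hj1le : j + 1 ≤ 2*h := hj2
  have hstepj := stepL j hj0 hj1le
  rw [not_le] at hQj1
  have hjcast : ((j+1:ℤ):ℝ) = (j:ℝ)+1 := by push_cast; ring
  rw [hjcast] at hQj1
  set b : ℤ := ⌊S astar⌋ + p*j with hbdef
  have hbcast : ((b:ℤ):ℝ) = ((⌊S astar⌋:ℤ):ℝ) + (p:ℝ)*(j:ℝ) := by rw [hbdef]; push_cast; ring
  have hmemj := hmem j hj0 (by linarith)
  have hb0 : 0 ≤ S (astar - j*r) - (b:ℝ) := by rw [hbcast]; linarith [hQj]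
  have hjr2 : (j:ℝ) + 2 ≤ 2*(h:ℝ) + 2 := by
    have : (j:ℝ) ≤ 2*(h:ℝ) := by exact_mod_cast hj2.le
    linarith
  have hbD : S (astar - j*r) - (b:ℝ) ≤ Δ := by
    have hmon : lam2*(r:ℝ)^2*((j:ℝ)+2) ≤ lam2*(r:ℝ)^2*(2*(h:ℝ)+2) :=
      mul_le_mul_of_nonneg_left hjr2 (by positivity)
    rw [hbcast]
    linarith [hstepj, hQj1, hmon]
  obtain ⟨w1, w2, w3, w4, w5, w6⟩ := hw (astar - j*r) hmemj.1 hmemj.2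
  refine ⟨astar - j*r, b, hmemj.1, hmemj.2, ?_, ?_⟩
  · rw [abs_le]
    constructor <;> linarith [hb0, hbD]
  · have hiden : ((astar - j*r:ℤ):ℝ)^2 + ((b:ℤ):ℝ)^2 - F =
        ((b:ℝ) - S (astar - j*r))*((b:ℝ) + S (astar - j*r)) := by
      linear_combination w5
    rw [hiden, abs_mul]
    have habs1 : |(b:ℝ) - S (astar - j*r)| ≤ Δ := by
      rw [abs_le]; constructor <;> linarith [hb0, hbD]
    have hblow : ℓ - Δ ≤ (b:ℝ) := by linarith [hb0, hbD, w3]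
    have habs2 : |(b:ℝ) + S (astar - j*r)| ≤ 2*R + Δ := by
      rw [abs_le]
      constructor
      · linarith [w3, w4, hℓ0]
      · linarith [w4, hb0, hbD]
    calc |(b:ℝ) - S (astar - j*r)| * |(b:ℝ) + S (astar - j*r)|
        ≤ Δ * (2*R + Δ) := by
          apply mul_le_mul habs1 habs2 (abs_nonneg _) hΔnn



lemma sqrt_quad (u d : ℝ) (hu : 0 < u) (hd : 0 ≤ d) :
    Real.sqrt (u^2 + d) ≤ u + d/(2*u) := by
  have h1 : 2*u*(d/(2*u)) = d := by field_simp
  have h2 : u^2 + d ≤ (u + d/(2*u))^2 := by nlinarith [sq_nonneg (d/(2*u))]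
  calc Real.sqrt (u^2+d) ≤ Real.sqrt ((u + d/(2*u))^2) := Real.sqrt_le_sqrt h2
    _ = u + d/(2*u) := Real.sqrt_sq (by positivity)

lemma margin_lo (α m B v μ : ℝ) (hμ0 : 0 < μ) (hα : 0 ≤ α) (hv : 0 ≤ v) (hm2B : m*(2*B) = μ)
    (hm0 : 0 < m) (hsq : α^2 + μ ≤ v^2) (hvB : v ≤ B) (hαB : α ≤ B) : α + m ≤ v := by
  have hvsq : 0 < v^2 := by linarith [sq_nonneg α]
  have hv0 : 0 < v := by
    rcases lt_or_eq_of_le hv with hh | hh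
    · exact hh
    · exfalso; rw [← hh] at hvsq; simp at hvsq
  have hva : 0 < v + α := by linarith
  have h3 : m*(v+α) ≤ μ := by
    nlinarith [mul_le_mul_of_nonneg_left (show v + α ≤ 2*B by linarith) hm0.le]
  nlinarith [h3, hva, hsq]
lemma margin_hi (β m B v μ : ℝ) (hμ0 : 0 < μ) (hv : 0 ≤ v) (hm2B : m*(2*B) = μ)
    (hm0 : 0 < m) (hsq : v^2 ≤ β^2 - μ) (hβB : β ≤ B) (hβ0 : 0 ≤ β) : v ≤ β - m := by
  have hβsq : 0 < β^2 := by linarith [sq_nonneg v]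
  have hβpos : 0 < β := by
    rcases lt_or_eq_of_le hβ0 with hh | hh
    · exact hh
    · exfalso; rw [← hh] at hβsq; simp at hβsq
  have hvβ : v ≤ β := (pow_le_pow_iff_left₀ hv hβ0 two_ne_zero).mp (by linarith)
  have h3 : m*(β+v) ≤ μ := by
    nlinarith [mul_le_mul_of_nonneg_left (show β + v ≤ 2*B by linarith) hm0.le]
  nlinarith [h3, hsq, hβpos, hv]
lemma sq_add_bound (s B : ℝ) (hs : 0 ≤ s) (hB : 0 ≤ B) : s^2 ≤ (B + s + 1)^2 := by
  nlinarith

theorem stmt_10 (α₁ β₁ α₂ β₂ γ₁ γ₂ : ℝ)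
    (hα₁ : 0 ≤ α₁) (hα₂ : 0 ≤ α₂)
    (h₁ : α₁ < β₁) (h₂ : α₂ < β₂)
    (hγ₁ : α₁ ^ 2 + α₂ ^ 2 < γ₁) (hγ : γ₁ < γ₂) (hγ₂ : γ₂ < β₁ ^ 2 + β₂ ^ 2)
    (q : ℕ) (hq : 0 < q) :
    ∃ C : ℝ, ∃ N₀ : ℕ, ∀ N : ℕ, N₀ ≤ N →
      ∀ n : ℤ, γ₁ * (N : ℝ) ^ 2 ≤ (n : ℝ) → (n : ℝ) ≤ γ₂ * (N : ℝ) ^ 2 →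
        ∃ n₁ n₂ : ℤ, (q : ℤ) ∣ n₁ ∧ (q : ℤ) ∣ n₂ ∧
          α₁ * N ≤ (n₁ : ℝ) ∧ (n₁ : ℝ) ≤ β₁ * N ∧
          α₂ * N ≤ (n₂ : ℝ) ∧ (n₂ : ℝ) ≤ β₂ * N ∧
          |((n₁ ^ 2 + n₂ ^ 2 - n : ℤ) : ℝ)| ≤ C * Real.sqrt N := by
  have hβ₁0 : 0 < β₁ := lt_of_le_of_lt hα₁ h₁
  have hβ₂0 : 0 < β₂ := lt_of_le_of_lt hα₂ h₂
  set B : ℝ := max β₁ β₂ with hBdef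
  have hβ₁B : β₁ ≤ B := le_max_left _ _
  have hβ₂B : β₂ ≤ B := le_max_right _ _
  have hB0 : 0 < B := lt_of_lt_of_le hβ₁0 hβ₁B
  set μ : ℝ := min (min ((γ₁ - α₁^2 - α₂^2)/3) ((β₂^2 - α₂^2)/3))
      (min ((β₁^2+β₂^2 - γ₂)/3) ((β₁^2 - α₁^2)/2)) with hμdef
  have hμa : μ ≤ (γ₁ - α₁^2 - α₂^2)/3 := le_trans (min_le_left _ _) (min_le_left _ _)
  have hμb : μ ≤ (β₂^2 - α₂^2)/3 := le_trans (min_le_left _ _) (min_le_right _ _)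
  have hμc : μ ≤ (β₁^2+β₂^2 - γ₂)/3 := le_trans (min_le_right _ _) (min_le_left _ _)
  have hμd : μ ≤ (β₁^2 - α₁^2)/2 := le_trans (min_le_right _ _) (min_le_right _ _)
  have hβsq1 : α₁^2 < β₁^2 := by nlinarith
  have hβsq2 : α₂^2 < β₂^2 := by nlinarith
  have hμ0 : 0 < μ := by
    apply lt_min (lt_min (by linarith) (by linarith)) (lt_min (by linarith) (by linarith))
  have hsμ0 : 0 < Real.sqrt μ := Real.sqrt_pos.mpr hμ0
  have hsμsq : Real.sqrt μ ^ 2 = μ := Real.sq_sqrt hμ0.le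
  have hsμB : Real.sqrt μ ≤ B := by
    have hb2 : β₂^2 ≤ B^2 := pow_le_pow_left₀ hβ₂0.le hβ₂B 2
    have h1 : μ ≤ B^2 := by linarith [sq_nonneg α₂]
    calc Real.sqrt μ ≤ Real.sqrt (B^2) := Real.sqrt_le_sqrt h1
      _ = B := Real.sqrt_sq hB0.le
  set m : ℝ := μ/(2*B) with hmdef
  have hm0 : 0 < m := by positivity
  have hm2B : m*(2*B) = μ := div_mul_cancel₀ _ (by positivity)
  set qR : ℝ := (q:ℝ) with hqRdef
  have hqR0 : 0 < qR := by rw [hqRdef]; exact_mod_cast hq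
  have hγ₁0 : 0 ≤ γ₁ := by nlinarith
  have hγ₂0 : 0 ≤ γ₂ := by linarith
  have hsγ₂sq : Real.sqrt γ₂ ^ 2 = γ₂ := Real.sq_sqrt hγ₂0
  have hsγ₂nn : 0 ≤ Real.sqrt γ₂ := Real.sqrt_nonneg _
  set K₁ : ℝ := Real.sqrt μ/(2*qR) with hK₁def
  set K₂ : ℝ := (B + Real.sqrt γ₂ + 1)/qR with hK₂def
  have hK₁0 : 0 < K₁ := by positivity
  have hK₂0 : 0 < K₂ := by positivity
  have hK₁K₂ : K₁ ≤ K₂ := by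
    rw [hK₁def, hK₂def, div_le_div_iff₀ (by positivity) (by positivity)]
    have h1 : Real.sqrt μ * qR ≤ B * qR := mul_le_mul_of_nonneg_right hsμB hqR0.le
    have h2 : B * qR ≤ (B + Real.sqrt γ₂ + 1) * (2*qR) :=
      mul_le_mul (by linarith) (by linarith) hqR0.le (by linarith)
    linarith
  set ε : ℝ := min (min (m/(2*qR)) (m*Real.sqrt μ/(2*qR*B))) (Real.sqrt μ/(4*qR)) with hεdef
  have hε0 : 0 < ε := lt_min (lt_min (by positivity) (by positivity)) (by positivity)
  have hεa : ε ≤ m/(2*qR) := le_trans (min_le_left _ _) (min_le_left _ _)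
  have hεb : ε ≤ m*Real.sqrt μ/(2*qR*B) := le_trans (min_le_left _ _) (min_le_right _ _)
  have hεc : ε ≤ Real.sqrt μ/(4*qR) := min_le_right _ _
  set c₁ : ℝ := 2*K₁^3/K₂^4 with hc₁def
  set c₂ : ℝ := 2*K₂^3/K₁^4 with hc₂def
  have hc₁0 : 0 < c₁ := by positivity
  have hc₂0 : 0 < c₂ := by positivity
  have hsc₁0 : 0 < Real.sqrt c₁ := Real.sqrt_pos.mpr hc₁0
  have hsc₁sq : Real.sqrt c₁ ^ 2 = c₁ := Real.sq_sqrt hc₁0.le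
  set r : ℤ := max 1 ⌈4/(c₁*ε)⌉ with hrdef
  have hr : 0 < r := lt_of_lt_of_le one_pos (le_max_left _ _)
  have hr0R : (0:ℝ) < (r:ℝ) := by exact_mod_cast hr
  have hrR1 : (1:ℝ) ≤ (r:ℝ) := by exact_mod_cast hr
  have hrge : 4/(c₁*ε) ≤ (r:ℝ) := by
    calc 4/(c₁*ε) ≤ (⌈4/(c₁*ε)⌉:ℝ) := Int.le_ceil _
      _ ≤ (r:ℝ) := by exact_mod_cast le_max_right 1 ⌈4/(c₁*ε)⌉
  set C₃ : ℝ := 2*c₂*(r:ℝ)/Real.sqrt c₁ + 4*c₂*(r:ℝ)^2 with hC₃def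
  set C : ℝ := qR^2*(2*K₂+1)*C₃ with hCdef
  obtain ⟨N₁, hN₁⟩ := lin_dom 0 qR (m/2) (by positivity)
  obtain ⟨N₂, hN₂⟩ := lin_dom 0 (qR*B/Real.sqrt μ + qR) (m/2) (by positivity)
  obtain ⟨N₃, hN₃⟩ := lin_dom 0 1 (Real.sqrt μ/(4*qR)) (by positivity)
  obtain ⟨N₄, hN₄⟩ := lin_dom (2/Real.sqrt c₁) (4*(r:ℝ)+2) (ε/2) (by positivity)
  obtain ⟨N₅, hN₅⟩ := lin_dom (2*c₂*(r:ℝ)/Real.sqrt c₁) (4*c₂*(r:ℝ)^2) 1 one_pos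
  obtain ⟨N₆, hN₆⟩ := lin_dom 0 1 K₁ hK₁0
  obtain ⟨N₇, hN₇⟩ := lin_dom 0 1 1 one_pos
  refine ⟨C, N₁+N₂+N₃+N₄+N₅+N₆+N₇, fun N hN n hn1 hn2 => ?_⟩
  have E1 : qR ≤ m/2*(N:ℝ) := by simpa using hN₁ N (by omega)
  have E2 : qR*B/Real.sqrt μ + qR ≤ m/2*(N:ℝ) := by simpa using hN₂ N (by omega)
  have E3 : (1:ℝ) ≤ Real.sqrt μ/(4*qR)*(N:ℝ) := by simpa using hN₃ N (by omega)
  have E4 : 2/Real.sqrt c₁*Real.sqrt N + (4*(r:ℝ)+2) ≤ ε/2*(N:ℝ) := hN₄ N (by omega)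
  have E5 : 2*c₂*(r:ℝ)/Real.sqrt c₁*Real.sqrt N + 4*c₂*(r:ℝ)^2 ≤ 1*(N:ℝ) := hN₅ N (by omega)
  have E6 : (1:ℝ) ≤ K₁*(N:ℝ) := by simpa using hN₆ N (by omega)
  have hNR1 : (1:ℝ) ≤ (N:ℝ) := by simpa using hN₇ N (by omega)
  have hN0R : (0:ℝ) < (N:ℝ) := by linarith
  have hsNnn : 0 ≤ Real.sqrt N := Real.sqrt_nonneg _
  have hsN1 : (1:ℝ) ≤ Real.sqrt N := by
    rw [show (1:ℝ) = Real.sqrt 1 by simp]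
    exact Real.sqrt_le_sqrt hNR1
  have hsNsq : Real.sqrt N * Real.sqrt N = (N:ℝ) := Real.mul_self_sqrt hN0R.le
  -- normalized target
  set t : ℝ := (n:ℝ)/(N:ℝ)^2 with htdef
  have htN : t*(N:ℝ)^2 = (n:ℝ) := div_mul_cancel₀ _ (by positivity)
  have ht1 : γ₁ ≤ t := by rw [htdef, le_div_iff₀ (by positivity)]; linarith
  have ht2 : t ≤ γ₂ := by rw [htdef, div_le_iff₀ (by positivity)]; linarith
  set Y : ℝ := max (α₂^2 + μ) (t - β₁^2 + μ) with hYdef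
  have hY1 : α₂^2 + μ ≤ Y := le_max_left _ _
  have hY2 : Y ≤ β₂^2 - μ := by
    apply max_le
    · linarith
    · linarith
  have hX1 : α₁^2 + μ ≤ t - Y := by
    have hYle : Y ≤ t - α₁^2 - μ := by
      apply max_le
      · linarith
      · linarith
    linarith
  have hX2 : t - Y ≤ β₁^2 - μ := by
    have := le_max_right (α₂^2 + μ) (t - β₁^2 + μ)
    linarith
  have hY0 : 0 ≤ Y := by linarith [sq_nonneg α₂]
  have hX0 : 0 ≤ t - Y := by linarith [sq_nonneg α₁]
  set y : ℝ := Real.sqrt Y with hydef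
  set x : ℝ := Real.sqrt (t - Y) with hxdef
  have hy2 : y^2 = Y := Real.sq_sqrt hY0
  have hx2 : x^2 = t - Y := Real.sq_sqrt hX0
  have hxy : x^2 + y^2 = t := by rw [hx2, hy2]; ring
  have hx0 : 0 ≤ x := Real.sqrt_nonneg _
  have hy0 : 0 ≤ y := Real.sqrt_nonneg _
  have hxl : Real.sqrt μ ≤ x := Real.sqrt_le_sqrt (by linarith [sq_nonneg α₁])
  have hyl : Real.sqrt μ ≤ y := Real.sqrt_le_sqrt (by linarith [sq_nonneg α₂])
  have hxu : x ≤ β₁ := by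
    calc x ≤ Real.sqrt (β₁^2) := Real.sqrt_le_sqrt (by linarith)
      _ = β₁ := Real.sqrt_sq hβ₁0.le
  have hyu : y ≤ β₂ := by
    calc y ≤ Real.sqrt (β₂^2) := Real.sqrt_le_sqrt (by linarith)
      _ = β₂ := Real.sqrt_sq hβ₂0.le
  -- margins
  have hxm : α₁ + m ≤ x :=
    margin_lo α₁ m B x μ hμ0 hα₁ hx0 hm2B hm0 (by linarith [hx2]) (le_trans hxu hβ₁B)
      (by linarith)
  have hym : α₂ + m ≤ y :=
    margin_lo α₂ m B y μ hμ0 hα₂ hy0 hm2B hm0 (by linarith [hy2]) (le_trans hyu hβ₂B)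
      (by linarith)
  have hyM : y ≤ β₂ - m :=
    margin_hi β₂ m B y μ hμ0 hy0 hm2B hm0 (by linarith [hy2]) hβ₂B hβ₂0.le
  -- scaled quantities
  set F : ℝ := (n:ℝ)/qR^2 with hFdef
  set X : ℝ := x*(N:ℝ)/qR with hXdef
  have hqF : qR^2*F = (n:ℝ) := by rw [hFdef]; field_simp
  have hFX : F - X^2 = (y*(N:ℝ)/qR)^2 := by
    rw [hFdef, hXdef]
    rw [← hxy] at htN
    field_simp
    linarith [htN]
  set A : ℤ := ⌊X⌋ with hAdef
  have hA1 : (A:ℝ) ≤ X := Int.floor_le X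
  have hA2 : X - 1 ≤ (A:ℝ) := by linarith [Int.lt_floor_add_one X]
  set L : ℤ := ⌊ε*(N:ℝ)⌋ with hLdef
  have hL1 : (L:ℝ) ≤ ε*(N:ℝ) := Int.floor_le _
  have hL2 : ε*(N:ℝ) - 1 ≤ (L:ℝ) := by linarith [Int.lt_floor_add_one (ε*(N:ℝ))]
  set l : ℝ := K₁*(N:ℝ) with hldef
  set R : ℝ := K₂*(N:ℝ) with hRdef
  have hl0 : 0 < l := mul_pos hK₁0 hN0R
  have hR0 : 0 < R := mul_pos hK₂0 hN0R
  have hlR : l ≤ R := mul_le_mul_of_nonneg_right hK₁K₂ hN0R.le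
  set h : ℤ := max 1 ⌈Real.sqrt N/((r:ℝ)*Real.sqrt c₁)⌉ with hhdef
  have hh : 0 < h := lt_of_lt_of_le one_pos (le_max_left _ _)
  have hhR1 : (1:ℝ) ≤ (h:ℝ) := by exact_mod_cast hh
  have hwnn : 0 ≤ Real.sqrt N/((r:ℝ)*Real.sqrt c₁) :=
    div_nonneg hsNnn (mul_nonneg hr0R.le (Real.sqrt_nonneg _))
  have hhge : Real.sqrt N/((r:ℝ)*Real.sqrt c₁) ≤ (h:ℝ) := by
    calc Real.sqrt N/((r:ℝ)*Real.sqrt c₁) ≤ (⌈Real.sqrt N/((r:ℝ)*Real.sqrt c₁)⌉:ℝ) :=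
          Int.le_ceil _
      _ ≤ (h:ℝ) := by exact_mod_cast le_max_right 1 ⌈Real.sqrt N/((r:ℝ)*Real.sqrt c₁)⌉
  have hhle : (h:ℝ) ≤ Real.sqrt N/((r:ℝ)*Real.sqrt c₁) + 1 := by
    rcases max_choice 1 ⌈Real.sqrt N/((r:ℝ)*Real.sqrt c₁)⌉ with hmc | hmc
    · rw [hhdef, hmc]; push_cast; linarith
    · rw [hhdef, hmc]
      have := Int.ceil_lt_add_one (Real.sqrt N/((r:ℝ)*Real.sqrt c₁))
      linarith
  have hlam1N : 2*l^3/R^4 = c₁/(N:ℝ) := by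
    rw [hldef, hRdef, hc₁def]
    field_simp
  have hlam2N : 2*R^3/l^4 = c₂/(N:ℝ) := by
    rw [hldef, hRdef, hc₂def]
    field_simp
  have hhrR : (2*(h:ℝ)+2)*(r:ℝ) + 2 ≤ ε/2*(N:ℝ) := by
    have h1 : (2*(h:ℝ)+2)*(r:ℝ) ≤ 2*Real.sqrt N/Real.sqrt c₁ + 4*(r:ℝ) := by
      have h2 : (2*(h:ℝ)+2) ≤ 2*(Real.sqrt N/((r:ℝ)*Real.sqrt c₁)) + 4 := by linarith
      have h3 := mul_le_mul_of_nonneg_right h2 hr0R.le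
      have h4 : (2*(Real.sqrt N/((r:ℝ)*Real.sqrt c₁)) + 4)*(r:ℝ)
          = 2*Real.sqrt N/Real.sqrt c₁ + 4*(r:ℝ) := by
        field_simp
      linarith
    have h5 : 2*Real.sqrt N/Real.sqrt c₁ = 2/Real.sqrt c₁*Real.sqrt N := by ring
    linarith [E4]
  have hhrnn : (0:ℝ) ≤ (2*(h:ℝ)+2)*(r:ℝ) := mul_nonneg (by linarith) hr0R.le
  have hLout : (2*h+2)*r + 1 ≤ L := by
    have h6 : (((2*h+2)*r + 1 : ℤ):ℝ) ≤ (L:ℝ) := by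
      push_cast
      linarith [hL2, hhrR]
    exact_mod_cast h6
  have hL0R : (1:ℝ) ≤ (L:ℝ) := by
    have h8 : (0:ℤ) ≤ (2*h+2)*r := mul_nonneg (by linarith) hr.le
    have : (1:ℤ) ≤ L := by linarith [hLout]
    exact_mod_cast this
  have hsweep : 2/(r:ℝ) ≤ (2*l^3/R^4)*((L:ℝ) - (2*(h:ℝ)+2)*(r:ℝ)) := by
    rw [hlam1N]
    have h1 : ε/2*(N:ℝ) ≤ (L:ℝ) - (2*(h:ℝ)+2)*(r:ℝ) := by linarith [hL2, hhrR]
    have h2 : 2/(r:ℝ) ≤ c₁/(N:ℝ)*(ε/2*(N:ℝ)) := by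
      have h3 : c₁/(N:ℝ)*(ε/2*(N:ℝ)) = c₁*ε/2 := by field_simp
      rw [h3, div_le_iff₀ hr0R]
      have h4 := mul_le_mul_of_nonneg_left hrge
        (show (0:ℝ) ≤ c₁*ε/2 by
          have := mul_pos hc₁0 hε0
          linarith)
      have h5 : c₁*ε/2*(4/(c₁*ε)) = 2 := by field_simp; ring
      linarith
    have h6 := mul_le_mul_of_nonneg_left h1 (div_nonneg hc₁0.le hN0R.le)
    linarith
  have hlamout : 1 ≤ (2*l^3/R^4)*(r:ℝ)^2*(h:ℝ)^2 := by
    rw [hlam1N]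
    have h1 : Real.sqrt N ≤ (h:ℝ)*((r:ℝ)*Real.sqrt c₁) := by
      rw [div_le_iff₀ (mul_pos hr0R hsc₁0)] at hhge
      exact hhge
    have h2 : (N:ℝ) ≤ (h:ℝ)^2*(r:ℝ)^2*c₁ := by
      calc (N:ℝ) = Real.sqrt N * Real.sqrt N := hsNsq.symm
        _ ≤ ((h:ℝ)*((r:ℝ)*Real.sqrt c₁))*((h:ℝ)*((r:ℝ)*Real.sqrt c₁)) :=
            mul_le_mul h1 h1 hsNnn (mul_nonneg (by linarith) (mul_nonneg hr0R.le hsc₁0.le))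
        _ = (h:ℝ)^2*(r:ℝ)^2*(Real.sqrt c₁^2) := by ring
        _ = (h:ℝ)^2*(r:ℝ)^2*c₁ := by rw [hsc₁sq]
    rw [div_mul_eq_mul_div, div_mul_eq_mul_div, le_div_iff₀ hN0R]
    linarith [h2]
  -- the window
  have hXlow : Real.sqrt μ*(N:ℝ)/qR ≤ X := by
    rw [hXdef, div_le_div_iff₀ hqR0 hqR0]
    exact mul_le_mul_of_nonneg_right (mul_le_mul_of_nonneg_right hxl hN0R.le) hqR0.le
  have hXup : X ≤ B*(N:ℝ)/qR := by
    rw [hXdef, div_le_div_iff₀ hqR0 hqR0]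
    have hxB : x ≤ B := le_trans hxu hβ₁B
    exact mul_le_mul_of_nonneg_right (mul_le_mul_of_nonneg_right hxB hN0R.le) hqR0.le
  have hBK₂ : B*(N:ℝ)/qR ≤ R := by
    rw [hRdef, hK₂def, div_mul_eq_mul_div, div_le_div_iff₀ hqR0 hqR0]
    have h1 : B*(N:ℝ) ≤ (B + Real.sqrt γ₂ + 1)*(N:ℝ) :=
      mul_le_mul_of_nonneg_right (by linarith) hN0R.le
    exact mul_le_mul_of_nonneg_right h1 hqR0.le
  have hFle : F ≤ R^2 := by
    have h2 : γ₂ ≤ (B + Real.sqrt γ₂ + 1)^2 := by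
      have h3 := sq_add_bound (Real.sqrt γ₂) B hsγ₂nn hB0.le
      linarith [hsγ₂sq]
    rw [hFdef, hRdef, hK₂def]
    rw [div_le_iff₀ (pow_pos hqR0 2)]
    have hid : ((B + Real.sqrt γ₂ + 1)/qR*(N:ℝ))^2*qR^2 = (B + Real.sqrt γ₂ + 1)^2*(N:ℝ)^2 := by
      field_simp
      try ring
    rw [hid]
    have h4 := mul_le_mul_of_nonneg_right h2 (sq_nonneg (N:ℝ))
    linarith [hn2]
  have hu0nn : (0:ℝ) ≤ Real.sqrt μ*(N:ℝ)/qR :=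
    div_nonneg (mul_nonneg hsμ0.le hN0R.le) hqR0.le
  have hFXl : (Real.sqrt μ*(N:ℝ)/qR)^2 ≤ F - X^2 := by
    rw [hFX]
    have h1 : Real.sqrt μ*(N:ℝ)/qR ≤ y*(N:ℝ)/qR := by
      rw [div_le_div_iff₀ hqR0 hqR0]
      exact mul_le_mul_of_nonneg_right (mul_le_mul_of_nonneg_right hyl hN0R.le) hqR0.le
    exact pow_le_pow_left₀ hu0nn h1 2
  have hl4 : 4*l^2 = (Real.sqrt μ*(N:ℝ)/qR)^2 := by
    rw [hldef, hK₁def]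
    field_simp
    ring
  have hwin : ∀ a : ℤ, A - L ≤ a → a ≤ A →
      l ≤ (a:ℝ) ∧ (a:ℝ) ≤ R ∧ l ≤ Real.sqrt (F - (a:ℝ)^2) ∧ Real.sqrt (F - (a:ℝ)^2) ≤ R := by
    intro a ha1 ha2
    have ha1R : (A:ℝ) - (L:ℝ) ≤ (a:ℝ) := by exact_mod_cast ha1
    have ha2R : (a:ℝ) ≤ (A:ℝ) := by exact_mod_cast ha2
    have hεNle : ε*(N:ℝ) ≤ Real.sqrt μ/(4*qR)*(N:ℝ) := mul_le_mul_of_nonneg_right hεc hN0R.le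
    have hid1 : Real.sqrt μ*(N:ℝ)/qR - 2*(Real.sqrt μ/(4*qR)*(N:ℝ)) = K₁*(N:ℝ) := by
      rw [hK₁def]
      field_simp
      ring
    have hal : l ≤ (a:ℝ) := by
      rw [hldef]
      linarith [hXlow, hA2, hL1, hεNle, E3, hid1, ha1R]
    have hau : (a:ℝ) ≤ R := by linarith [ha2R, hA1, hXup, hBK₂]
    have ha0 : (0:ℝ) < (a:ℝ) := lt_of_lt_of_le hl0 hal
    have haX : (a:ℝ) ≤ X := le_trans ha2R hA1
    have haA2 : (a:ℝ)^2 ≤ X^2 := pow_le_pow_left₀ ha0.le haX 2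
    have harg_lb : l^2 ≤ F - (a:ℝ)^2 := by
      linarith [hFXl, hl4, haA2, sq_nonneg l]
    have harg_ub : F - (a:ℝ)^2 ≤ R^2 := by linarith [sq_nonneg ((a:ℝ)), hFle]
    refine ⟨hal, hau, ?_, ?_⟩
    · calc l = Real.sqrt (l^2) := (Real.sqrt_sq hl0.le).symm
        _ ≤ Real.sqrt (F - (a:ℝ)^2) := Real.sqrt_le_sqrt harg_lb
    · calc Real.sqrt (F - (a:ℝ)^2) ≤ Real.sqrt (R^2) := Real.sqrt_le_sqrt harg_ub
        _ = R := Real.sqrt_sq hR0.le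
  obtain ⟨a, b, hab1, hab2, habs, herr⟩ := core F l R hl0 hlR A L r h hr hh hLout hwin hsweep hlamout
  -- abbreviations for the error bound
  have hΔid : (2*R^3/l^4)*(r:ℝ)^2*(2*(h:ℝ)+2)*(N:ℝ) = c₂*(r:ℝ)^2*(2*(h:ℝ)+2) := by
    rw [hlam2N]
    field_simp
    try ring
  have hR3 : (0:ℝ) < 2*R^3 := by positivity
  have hΔnn : 0 ≤ (2*R^3/l^4)*(r:ℝ)^2*(2*(h:ℝ)+2) := by
    have h1 : 0 < 2*R^3/l^4 := div_pos hR3 (pow_pos hl0 4)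
    exact mul_nonneg (mul_nonneg h1.le (sq_nonneg _)) (by linarith)
  have hup : c₂*(r:ℝ)^2*(2*(h:ℝ)+2) ≤ 2*c₂*(r:ℝ)/Real.sqrt c₁*Real.sqrt N + 4*c₂*(r:ℝ)^2 := by
    have h1 : 2*(h:ℝ)+2 ≤ 2*(Real.sqrt N/((r:ℝ)*Real.sqrt c₁)) + 4 := by linarith [hhle]
    have h2 := mul_le_mul_of_nonneg_left h1 (mul_nonneg hc₂0.le (sq_nonneg (r:ℝ)))
    have h3 : c₂*(r:ℝ)^2*(2*(Real.sqrt N/((r:ℝ)*Real.sqrt c₁)) + 4)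
        = 2*c₂*(r:ℝ)/Real.sqrt c₁*Real.sqrt N + 4*c₂*(r:ℝ)^2 := by
      field_simp
    linarith
  have hΔle1 : (2*R^3/l^4)*(r:ℝ)^2*(2*(h:ℝ)+2) ≤ 1 := by
    have h4 : (2*R^3/l^4)*(r:ℝ)^2*(2*(h:ℝ)+2)*(N:ℝ) ≤ 1*(N:ℝ) := by
      rw [hΔid]
      linarith [E5, hup]
    exact le_of_mul_le_mul_right h4 hN0R
  have hΔNC₃ : (2*R^3/l^4)*(r:ℝ)^2*(2*(h:ℝ)+2)*(N:ℝ) ≤ C₃*Real.sqrt N := by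
    rw [hΔid, hC₃def]
    have h1 : 4*c₂*(r:ℝ)^2 ≤ 4*c₂*(r:ℝ)^2*Real.sqrt N := by
      have h0 := mul_le_mul_of_nonneg_left hsN1
        (show (0:ℝ) ≤ 4*c₂*(r:ℝ)^2 by
          have := mul_nonneg hc₂0.le (sq_nonneg (r:ℝ))
          linarith)
      linarith [h0]
    have h2 : (2*c₂*(r:ℝ)/Real.sqrt c₁ + 4*c₂*(r:ℝ)^2)*Real.sqrt N
        = 2*c₂*(r:ℝ)/Real.sqrt c₁*Real.sqrt N + 4*c₂*(r:ℝ)^2*Real.sqrt N := by ring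
    linarith [hup]
  -- bounds on the square root at a
  obtain ⟨wa1, wa2, wa3, wa4⟩ := hwin a hab1 hab2
  have habs' := abs_le.mp habs
  have hab1R : (A:ℝ) - (L:ℝ) ≤ (a:ℝ) := by exact_mod_cast hab1
  have hab2R : (a:ℝ) ≤ (A:ℝ) := by exact_mod_cast hab2
  have ha0 : (0:ℝ) < (a:ℝ) := lt_of_lt_of_le hl0 wa1
  have haX : (a:ℝ) ≤ X := le_trans hab2R hA1
  have hyNnn : (0:ℝ) < y*(N:ℝ)/qR := by
    apply div_pos (mul_pos (lt_of_lt_of_le hsμ0 hyl) hN0R) hqR0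
  have hSa_lb : y*(N:ℝ)/qR ≤ Real.sqrt (F - (a:ℝ)^2) := by
    have h1 : (a:ℝ)^2 ≤ X^2 := pow_le_pow_left₀ ha0.le haX 2
    calc y*(N:ℝ)/qR = Real.sqrt ((y*(N:ℝ)/qR)^2) := (Real.sqrt_sq hyNnn.le).symm
      _ ≤ Real.sqrt (F - (a:ℝ)^2) := Real.sqrt_le_sqrt (by linarith [hFX])
  have hL0Z : (1:ℤ) ≤ L := by exact_mod_cast hL0R
  obtain ⟨wb1, wb2, wb3, wb4⟩ := hwin (A - L) le_rfl (by linarith)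
  have hwb1 : l ≤ (A:ℝ) - (L:ℝ) := by
    have : ((A - L : ℤ):ℝ) = (A:ℝ) - (L:ℝ) := by push_cast; ring
    rwa [this] at wb1
  have hSa_ub : Real.sqrt (F - (a:ℝ)^2) ≤
      y*(N:ℝ)/qR + (1+ε*(N:ℝ))*(2*B*(N:ℝ)/qR)/(2*(y*(N:ℝ)/qR)) := by
    have hdnn : (0:ℝ) ≤ (1+ε*(N:ℝ))*(2*B*(N:ℝ)/qR) := by
      apply mul_nonneg (by linarith [mul_pos hε0 hN0R])
      exact div_nonneg (by linarith [mul_pos hB0 hN0R]) hqR0.le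
    have hALa : ((A:ℝ) - L)^2 ≤ (a:ℝ)^2 := pow_le_pow_left₀ (by linarith) hab1R 2
    have hd1 : X - ((A:ℝ)-L) ≤ 1 + ε*(N:ℝ) := by linarith [hA2, hL1]
    have hd2 : X + ((A:ℝ)-L) ≤ 2*(B*(N:ℝ)/qR) := by linarith [hXup, hA1, hL0R]
    have hd0 : 0 ≤ X - ((A:ℝ)-L) := by linarith [hA1, hL0R]
    have hd0' : 0 ≤ X + ((A:ℝ)-L) := by linarith [hwb1, hl0, hA1]
    have hprod := mul_le_mul hd1 hd2 hd0' (by linarith [mul_pos hε0 hN0R])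
    have hring : (X-((A:ℝ)-L))*(X+((A:ℝ)-L)) = X^2 - ((A:ℝ)-L)^2 := by ring
    have harg : F - (a:ℝ)^2 ≤ (y*(N:ℝ)/qR)^2 + (1+ε*(N:ℝ))*(2*B*(N:ℝ)/qR) := by
      have h9 : (1+ε*(N:ℝ))*(2*(B*(N:ℝ)/qR)) = (1+ε*(N:ℝ))*(2*B*(N:ℝ)/qR) := by ring
      linarith [hFX, hprod, hring, hALa]
    calc Real.sqrt (F - (a:ℝ)^2)
        ≤ Real.sqrt ((y*(N:ℝ)/qR)^2 + (1+ε*(N:ℝ))*(2*B*(N:ℝ)/qR)) := Real.sqrt_le_sqrt harg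
      _ ≤ y*(N:ℝ)/qR + (1+ε*(N:ℝ))*(2*B*(N:ℝ)/qR)/(2*(y*(N:ℝ)/qR)) :=
          sqrt_quad _ _ hyNnn hdnn
  -- the five goals
  refine ⟨q*a, q*b, dvd_mul_right _ _, dvd_mul_right _ _, ?_, ?_, ?_, ?_, ?_⟩
  · push_cast
    rw [← hqRdef]
    have h1 : (α₁ + m)*(N:ℝ) ≤ x*(N:ℝ) := mul_le_mul_of_nonneg_right hxm hN0R.le
    have h2 : qR*X = x*(N:ℝ) := by rw [hXdef]; field_simp
    have h3 : qR*(ε*(N:ℝ)) ≤ m/2*(N:ℝ) := by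
      have h4 := mul_le_mul_of_nonneg_left hεa hqR0.le
      have h5 : qR*(m/(2*qR)) = m/2 := by field_simp
      have h45 : qR*ε ≤ m/2 := by linarith
      have h46 := mul_le_mul_of_nonneg_right h45 hN0R.le
      linarith [h46]
    have h6 : qR*((A:ℝ) - (L:ℝ)) ≤ qR*(a:ℝ) := mul_le_mul_of_nonneg_left hab1R hqR0.le
    have h7 : qR*(X - 1 - ε*(N:ℝ)) ≤ qR*((A:ℝ) - (L:ℝ)) :=
      mul_le_mul_of_nonneg_left (by linarith [hA2, hL1]) hqR0.le
    linarith [h1, h2, h3, h6, h7, E1]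
  · push_cast
    rw [← hqRdef]
    have h2 : qR*X = x*(N:ℝ) := by rw [hXdef]; field_simp
    have h6 : qR*(a:ℝ) ≤ qR*X := mul_le_mul_of_nonneg_left haX hqR0.le
    have h8 : x*(N:ℝ) ≤ β₁*(N:ℝ) := mul_le_mul_of_nonneg_right hxu hN0R.le
    linarith
  · push_cast
    rw [← hqRdef]
    have hb_lb : Real.sqrt (F - (a:ℝ)^2) - (2*R^3/l^4)*(r:ℝ)^2*(2*(h:ℝ)+2) ≤ (b:ℝ) := by
      linarith [habs'.1]
    have h1 : (α₂ + m)*(N:ℝ) ≤ y*(N:ℝ) := mul_le_mul_of_nonneg_right hym hN0R.le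
    have h2 : qR*(y*(N:ℝ)/qR) = y*(N:ℝ) := by field_simp
    have h6 : qR*((y*(N:ℝ)/qR) - 1) ≤ qR*(b:ℝ) :=
      mul_le_mul_of_nonneg_left (by linarith [hb_lb, hSa_lb, hΔle1]) hqR0.le
    linarith [h1, h2, h6, E1, mul_pos hm0 hN0R]
  · push_cast
    rw [← hqRdef]
    have hb_ub : (b:ℝ) ≤ Real.sqrt (F - (a:ℝ)^2) + (2*R^3/l^4)*(r:ℝ)^2*(2*(h:ℝ)+2) := by
      linarith [habs'.2]
    have h2 : qR*(y*(N:ℝ)/qR) = y*(N:ℝ) := by field_simp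
    have hy0' : (0:ℝ) < y := lt_of_lt_of_le hsμ0 hyl
    have id5 : qR*((1+ε*(N:ℝ))*(2*B*(N:ℝ)/qR)/(2*(y*(N:ℝ)/qR))) = (1+ε*(N:ℝ))*B*qR/y := by
      field_simp
    have hann : 0 ≤ (1+ε*(N:ℝ))*B*qR :=
      mul_nonneg (mul_nonneg (by linarith [mul_pos hε0 hN0R]) hB0.le) hqR0.le
    have bound1 : (1+ε*(N:ℝ))*B*qR/y ≤ (1+ε*(N:ℝ))*B*qR/Real.sqrt μ :=
      div_le_div_of_nonneg_left hann hsμ0 hyl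
    have bound2 : (1+ε*(N:ℝ))*B*qR/Real.sqrt μ
        = B*qR/Real.sqrt μ + ε*(N:ℝ)*(B*qR/Real.sqrt μ) := by ring
    have bound3 : ε*(N:ℝ)*(B*qR/Real.sqrt μ) ≤ m/2*(N:ℝ) := by
      have b1 : ε*(B*qR/Real.sqrt μ) ≤ (m*Real.sqrt μ/(2*qR*B))*(B*qR/Real.sqrt μ) :=
        mul_le_mul_of_nonneg_right hεb (div_nonneg (mul_nonneg hB0.le hqR0.le) hsμ0.le)
      have b2 : (m*Real.sqrt μ/(2*qR*B))*(B*qR/Real.sqrt μ) = m/2 := by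
        field_simp
      have b3 : ε*(B*qR/Real.sqrt μ) ≤ m/2 := by linarith
      have b4 := mul_le_mul_of_nonneg_right b3 hN0R.le
      linarith [b4]
    have hqb1 : qR*(b:ℝ) ≤
        qR*(Real.sqrt (F - (a:ℝ)^2) + (2*R^3/l^4)*(r:ℝ)^2*(2*(h:ℝ)+2)) :=
      mul_le_mul_of_nonneg_left hb_ub hqR0.le
    have hqb2 : qR*Real.sqrt (F - (a:ℝ)^2) ≤
        qR*(y*(N:ℝ)/qR + (1+ε*(N:ℝ))*(2*B*(N:ℝ)/qR)/(2*(y*(N:ℝ)/qR))) :=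
      mul_le_mul_of_nonneg_left hSa_ub hqR0.le
    have hqΔ : qR*((2*R^3/l^4)*(r:ℝ)^2*(2*(h:ℝ)+2)) ≤ qR := by
      have hh1 := mul_le_mul_of_nonneg_left hΔle1 hqR0.le
      linarith [hh1]
    have hyN : y*(N:ℝ) ≤ (β₂ - m)*(N:ℝ) := mul_le_mul_of_nonneg_right hyM hN0R.le
    have e1 : qR*(y*(N:ℝ)/qR + (1+ε*(N:ℝ))*(2*B*(N:ℝ)/qR)/(2*(y*(N:ℝ)/qR)))
        = qR*(y*(N:ℝ)/qR) + qR*((1+ε*(N:ℝ))*(2*B*(N:ℝ)/qR)/(2*(y*(N:ℝ)/qR))) := by ring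
    have e2 : qR*(Real.sqrt (F - (a:ℝ)^2) + (2*R^3/l^4)*(r:ℝ)^2*(2*(h:ℝ)+2))
        = qR*Real.sqrt (F - (a:ℝ)^2) + qR*((2*R^3/l^4)*(r:ℝ)^2*(2*(h:ℝ)+2)) := by ring
    have t1 : qR*(b:ℝ) ≤ y*(N:ℝ) + (1+ε*(N:ℝ))*B*qR/y + qR := by
      linarith [hqb1, hqb2, hqΔ, e1, e2, h2, id5]
    have t2 : (1+ε*(N:ℝ))*B*qR/y ≤ B*qR/Real.sqrt μ + m/2*(N:ℝ) := by
      linarith [bound1, bound2, bound3]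
    have e3 : B*qR/Real.sqrt μ = qR*B/Real.sqrt μ := by ring
    linarith only [t1, t2, E2, hyN, e3]
  · have key : (((q*a:ℤ)^2 + (q*b:ℤ)^2 - n : ℤ):ℝ) = qR^2*((a:ℝ)^2+(b:ℝ)^2-F) := by
      push_cast
      rw [← hqRdef]
      linear_combination hqF
    rw [key, abs_mul, abs_of_nonneg (sq_nonneg qR)]
    have hRR : 2*R + (2*R^3/l^4)*(r:ℝ)^2*(2*(h:ℝ)+2) ≤ (2*K₂+1)*(N:ℝ) := by
      linarith [hΔle1, hNR1]
    have hK₂1 : (0:ℝ) ≤ 2*K₂+1 := by linarith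
    have hch : (2*R^3/l^4)*(r:ℝ)^2*(2*(h:ℝ)+2)*(2*R + (2*R^3/l^4)*(r:ℝ)^2*(2*(h:ℝ)+2))
        ≤ (2*K₂+1)*(C₃*Real.sqrt N) := by
      calc (2*R^3/l^4)*(r:ℝ)^2*(2*(h:ℝ)+2)*(2*R + (2*R^3/l^4)*(r:ℝ)^2*(2*(h:ℝ)+2))
          ≤ (2*R^3/l^4)*(r:ℝ)^2*(2*(h:ℝ)+2)*((2*K₂+1)*(N:ℝ)) :=
            mul_le_mul_of_nonneg_left hRR hΔnn
        _ = (2*K₂+1)*((2*R^3/l^4)*(r:ℝ)^2*(2*(h:ℝ)+2)*(N:ℝ)) := by ring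
        _ ≤ (2*K₂+1)*(C₃*Real.sqrt N) := mul_le_mul_of_nonneg_left hΔNC₃ hK₂1
    have hfin : qR^2*|(a:ℝ)^2 + (b:ℝ)^2 - F| ≤ qR^2*((2*K₂+1)*(C₃*Real.sqrt N)) :=
      mul_le_mul_of_nonneg_left (le_trans herr hch) (sq_nonneg qR)
    have hCfin : qR^2*((2*K₂+1)*(C₃*Real.sqrt N)) = C*Real.sqrt N := by
      rw [hCdef]
      ring
    linarith [hfin, hCfin]
end
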